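/- arXiv:2004.00462 — 2 statements merged into one kernel-verified Lean document; each statement's English description precedes it below -/
import Mathlib

section
/- For every 1 < r < ∞, 1 < p < ∞, every ergodic measure-preserving transformation τ of a probability space (X, μ), and every sequence (f_j) of measurable functions on X: ‖(∑_j (M♯ f_j)^r)^{1/r}‖_{L^p(X,μ)} ≤ C_{r,p} ‖(∑_j |f_j|^r)^{1/r}‖_{L^p(X,μ)}, where C_{r,p} is the constant in the Fefferman–Stein vector-valued maximal inequality on ℝ. -/
/-!
Calderón transference. Fix `x` and `N`, and spread the orbit values `f (τ^[k] x)`, `k < N`, over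
`[0, N)` as the step function equal to `f (τ^[k] x)` on `[k, k + 1)`. An ergodic average of
length `n + 1` at `τ^[k] x` is the average of this step function over `[k, k + n + 1]`, so for
`k + m < N` the ergodic maximal function truncated at length `m + 1` is dominated on `[k, k + 1)`
by the Hardy–Littlewood maximal function of the step function. The Fefferman–Stein inequality on
`ℝ` then bounds a Birkhoff sum of length `N` of the truncated vector maximal function by `c ^ p`
times a Birkhoff sum of length `N + m` of `(∑ j, |f j| ^ r) ^ (p / r)`. Integrating, the invariance
of `μ` turns both Birkhoff sums into multiples `N` and `N + m` of the integrals; let `N → ∞`, then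
`m → ∞` by monotone convergence.
-/
open MeasureTheory ENNReal

/-- The ergodic maximal function. -/
noncomputable def ergMax {X : Type*} (τ : X → X) (f : X → ℝ) (x : X) : ℝ≥0∞ :=
  ⨆ n : ℕ, (∑ k ∈ Finset.range (n + 1), ENNReal.ofReal |f (τ^[k] x)|) / (n + 1)

/-- The Hardy–Littlewood maximal function on `ℝ`. -/
noncomputable def hlMax (f : ℝ → ℝ) (t : ℝ) : ℝ≥0∞ :=
  ⨆ (a : ℝ) (b : ℝ) (_ : a ≤ t) (_ : t ≤ b) (_ : a < b),
    (∫⁻ y in Set.Icc a b, ENNReal.ofReal |f y|) / ENNReal.ofReal (b - a)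

open Filter Topology

/-- `‖a‖_{ℓ^r} ^ p`. -/
noncomputable def ellNormPow (r p : ℝ) (a : ℕ → ℝ≥0∞) : ℝ≥0∞ :=
  (∑' j, a j ^ r) ^ (p / r)

def FeffermanSteinIneq (r p : ℝ) (c : ℝ≥0∞) : Prop :=
  ∀ f : ℕ → ℝ → ℝ, (∀ j, Measurable (f j)) →
    (∫⁻ t, ellNormPow r p fun j => hlMax (f j) t) ^ (1 / p)
      ≤ c * (∫⁻ t, ellNormPow r p fun j => ENNReal.ofReal |f j t|) ^ (1 / p)

namespace ENNReal

theorem iSup_rpow_of_pos {ι : Sort*} (f : ι → ℝ≥0∞) {y : ℝ} (hy : 0 < y) :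
    (⨆ i, f i) ^ y = ⨆ i, f i ^ y :=
  (orderIsoRpow y hy).map_iSup f

theorem tsum_iSup_of_monotone {a : ℕ → ℕ → ℝ≥0∞} (ha : Monotone a) :
    ∑' j, ⨆ m, a m j = ⨆ m, ∑' j, a m j := by
  simp_rw [← lintegral_count]
  exact lintegral_iSup (fun _ => measurable_from_nat) ha

theorem rpow_mul_rpow_one_div {p : ℝ} (hp : 0 < p) (c B : ℝ≥0∞) :
    (c ^ p * B) ^ (1 / p) = c * B ^ (1 / p) := by
  rw [mul_rpow_of_nonneg _ _ (one_div_pos.2 hp).le, ← rpow_mul, mul_one_div_cancel hp.ne',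
    rpow_one]

theorem le_rpow_mul_of_rpow_one_div_le {p : ℝ} {A B c : ℝ≥0∞} (hp : 0 < p)
    (h : A ^ (1 / p) ≤ c * B ^ (1 / p)) : A ≤ c ^ p * B := by
  rwa [← rpow_le_rpow_iff (one_div_pos.2 hp), rpow_mul_rpow_one_div hp]

theorem le_of_forall_nat_mul_le_mul_add {A K : ℝ≥0∞} {m : ℕ}
    (h : ∀ N : ℕ, N * A ≤ K * (N + m)) : A ≤ K := by
  rcases eq_or_ne K ⊤ with rfl | hK
  · exact le_top
  have hbound : ∀ᶠ N : ℕ in atTop, A ≤ K + K * m * (N : ℝ≥0∞)⁻¹ := by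
    filter_upwards [eventually_ne_atTop 0] with N hN
    have hN' : (N : ℝ≥0∞)⁻¹ * N = 1 :=
      ENNReal.inv_mul_cancel (by exact_mod_cast hN) (natCast_ne_top N)
    calc A = (N : ℝ≥0∞)⁻¹ * (N * A) := by rw [← mul_assoc, hN', one_mul]
      _ ≤ (N : ℝ≥0∞)⁻¹ * (K * (N + m)) := mul_le_mul_right (h N) _
      _ = K * ((N : ℝ≥0∞)⁻¹ * N) + K * m * (N : ℝ≥0∞)⁻¹ := by ring
      _ = K + K * m * (N : ℝ≥0∞)⁻¹ := by rw [hN', mul_one]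
  have hlim : Tendsto (fun N : ℕ => K + K * m * (N : ℝ≥0∞)⁻¹) atTop (𝓝 K) := by
    simpa using tendsto_const_nhds.add (ENNReal.Tendsto.const_mul
      ENNReal.tendsto_inv_nat_nhds_zero (Or.inr (mul_ne_top hK (natCast_ne_top m))))
  exact ge_of_tendsto hlim hbound

end ENNReal

section ellNormPow

variable {r p : ℝ}

theorem ellNormPow_mono (hr : 0 < r) (hp : 0 ≤ p) : Monotone (ellNormPow r p) := fun _ _ hab =>
  rpow_le_rpow (ENNReal.tsum_le_tsum fun j => rpow_le_rpow (hab j) hr.le) (div_nonneg hp hr.le)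

theorem ellNormPow_zero (hr : 0 < r) (hp : 0 < p) : ellNormPow r p 0 = 0 := by
  simp [ellNormPow, zero_rpow_of_pos hr, zero_rpow_of_pos (div_pos hp hr)]

theorem iSup_ellNormPow (hr : 0 < r) (hp : 0 < p) {a : ℕ → ℕ → ℝ≥0∞} (ha : Monotone a) :
    ⨆ m, ellNormPow r p (a m) = ellNormPow r p (⨆ m, a m) := by
  have ha_rpow : Monotone fun m j => a m j ^ r := fun _ _ hmn j => rpow_le_rpow (ha hmn j) hr.le
  simp only [ellNormPow, iSup_apply, ENNReal.iSup_rpow_of_pos _ hr,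
    ENNReal.tsum_iSup_of_monotone ha_rpow, ENNReal.iSup_rpow_of_pos _ (div_pos hp hr)]

theorem Measurable.ellNormPow {X : Type*} [MeasurableSpace X] {F : ℕ → X → ℝ≥0∞}
    (hF : ∀ j, Measurable (F j)) : Measurable fun x => ellNormPow r p fun j => F j x :=
  (Measurable.tsum fun j => (hF j).pow_const r).pow_const _

end ellNormPow

theorem lintegral_Ico_natFloor (φ : ℕ → ℝ≥0∞) (a n : ℕ) :
    ∫⁻ t in Set.Ico (a : ℝ) (a + n), φ ⌊t⌋₊ = ∑ i ∈ Finset.range n, φ (a + i) := by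
  induction n with
  | zero => simp
  | succ n ih =>
    have hsplit : Set.Ico (a : ℝ) (a + (n + 1 : ℕ))
        = Set.Ico (a : ℝ) (a + n) ∪ Set.Ico ((a + n : ℕ) : ℝ) ((a + n : ℕ) + 1) := by
      push_cast
      rw [Set.Ico_union_Ico_eq_Ico (by simp) (by simp), add_assoc]
    have hlast : ∫⁻ t in Set.Ico ((a + n : ℕ) : ℝ) ((a + n : ℕ) + 1), φ ⌊t⌋₊ = φ (a + n) := by
      rw [setLIntegral_congr_fun measurableSet_Ico fun t ht => by rw [Nat.floor_eq_on_Ico _ t ht],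
        setLIntegral_const, Real.volume_Ico]
      simp
    rw [hsplit, lintegral_union measurableSet_Ico (by push_cast; exact Set.Ico_disjoint_Ico_same),
      ih, hlast, Finset.sum_range_succ]

theorem lintegral_Ico_zero_natFloor (φ : ℕ → ℝ≥0∞) (n : ℕ) :
    ∫⁻ t in Set.Ico (0 : ℝ) n, φ ⌊t⌋₊ = ∑ i ∈ Finset.range n, φ i := by
  simpa using lintegral_Ico_natFloor φ 0 n

theorem le_hlMax (g : ℝ → ℝ) {t a b : ℝ} (hat : a ≤ t) (htb : t ≤ b) (hab : a < b) :
    (∫⁻ y in Set.Icc a b, ENNReal.ofReal |g y|) / ENNReal.ofReal (b - a) ≤ hlMax g t :=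
  le_iSup_of_le a <| le_iSup_of_le b <| le_iSup_of_le hat <| le_iSup_of_le htb <|
    le_iSup_of_le hab le_rfl

section Orbit

variable {X : Type*} (τ : X → X)

noncomputable def ergAvg (f : X → ℝ) (n : ℕ) (x : X) : ℝ≥0∞ :=
  (∑ k ∈ Finset.range (n + 1), ENNReal.ofReal |f (τ^[k] x)|) / (n + 1)

noncomputable def ergMaxTrunc (f : X → ℝ) (m : ℕ) (x : X) : ℝ≥0∞ :=
  ⨆ n ≤ m, ergAvg τ f n x

noncomputable def orbitStepFun (f : X → ℝ) (N : ℕ) (x : X) : ℝ → ℝ :=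
  (Set.Ico 0 (N : ℝ)).indicator fun t => f (τ^[⌊t⌋₊] x)

variable {τ}

theorem iSup_ergMaxTrunc (f : X → ℝ) (x : X) : ⨆ m, ergMaxTrunc τ f m x = ergMax τ f x :=
  biSup_le_eq_iSup

theorem monotone_ergMaxTrunc (f : X → ℝ) (x : X) : Monotone fun m => ergMaxTrunc τ f m x :=
  fun _ _ hab => biSup_mono fun _ hn => hn.trans hab

theorem measurable_ergMaxTrunc [MeasurableSpace X] (hτ : Measurable τ) {f : X → ℝ}
    (hf : Measurable f) (m : ℕ) : Measurable (ergMaxTrunc τ f m) :=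
  Measurable.iSup fun _ => Measurable.iSup fun _ =>
    (Finset.measurable_sum _ fun k _ => (hf.comp (hτ.iterate k)).abs.ennreal_ofReal).div_const _

theorem measurable_orbitStepFun (f : X → ℝ) (N : ℕ) (x : X) : Measurable (orbitStepFun τ f N x) :=
  ((measurable_from_nat (f := fun k => f (τ^[k] x))).comp Nat.measurable_floor).indicator
    measurableSet_Ico

theorem orbitStepFun_of_mem (f : X → ℝ) {N : ℕ} (x : X) {t : ℝ} (ht : t ∈ Set.Ico 0 (N : ℝ)) :
    orbitStepFun τ f N x t = f (τ^[⌊t⌋₊] x) :=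
  Set.indicator_of_mem ht _

theorem orbitStepFun_of_notMem (f : X → ℝ) {N : ℕ} (x : X) {t : ℝ}
    (ht : t ∉ Set.Ico 0 (N : ℝ)) : orbitStepFun τ f N x t = 0 :=
  Set.indicator_of_notMem ht _

theorem ergAvg_le_hlMax_orbitStepFun (f : X → ℝ) (x : X) {n N : ℕ} {t : ℝ} (ht : 0 ≤ t)
    (hN : ⌊t⌋₊ + n < N) : ergAvg τ f n (τ^[⌊t⌋₊] x) ≤ hlMax (orbitStepFun τ f N x) t := by
  set k := ⌊t⌋₊
  have hsum : ∑ i ∈ Finset.range (n + 1), ENNReal.ofReal |f (τ^[i] (τ^[k] x))|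
      = ∫⁻ y in Set.Ico (k : ℝ) (k + (n + 1 : ℕ)), ENNReal.ofReal |orbitStepFun τ f N x y| := by
    have hstep : ∀ y ∈ Set.Ico (k : ℝ) (k + (n + 1 : ℕ)),
        ENNReal.ofReal |orbitStepFun τ f N x y| = ENNReal.ofReal |f (τ^[⌊y⌋₊] x)| := fun y hy => by
      rw [orbitStepFun_of_mem f x
        ⟨(Nat.cast_nonneg k).trans hy.1, hy.2.trans_le (by exact_mod_cast hN)⟩]
    rw [setLIntegral_congr_fun measurableSet_Ico hstep,
      lintegral_Ico_natFloor (fun i => ENNReal.ofReal |f (τ^[i] x)|)]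
    exact Finset.sum_congr rfl fun i _ => by rw [add_comm, Function.iterate_add_apply]
  have hlen : ENNReal.ofReal ((k + (n + 1 : ℕ)) - k) = (n + 1 : ℝ≥0∞) := by
    rw [add_sub_cancel_left, ENNReal.ofReal_natCast]
    push_cast
    rfl
  calc ergAvg τ f n (τ^[k] x)
      = (∫⁻ y in Set.Ico (k : ℝ) (k + (n + 1 : ℕ)), ENNReal.ofReal |orbitStepFun τ f N x y|)
          / ENNReal.ofReal ((k + (n + 1 : ℕ)) - k) := by rw [← hsum, hlen]; rfl
    _ ≤ (∫⁻ y in Set.Icc (k : ℝ) (k + (n + 1 : ℕ)), ENNReal.ofReal |orbitStepFun τ f N x y|)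
          / ENNReal.ofReal ((k + (n + 1 : ℕ)) - k) :=
        ENNReal.div_le_div_right (lintegral_mono_set Set.Ico_subset_Icc_self) _
    _ ≤ hlMax (orbitStepFun τ f N x) t := by
        refine le_hlMax _ (Nat.floor_le ht) ?_ (lt_add_of_pos_right _ (by positivity))
        exact (Nat.lt_floor_add_one t).le.trans (by push_cast; linarith)

theorem ergMaxTrunc_le_hlMax_orbitStepFun (f : X → ℝ) (x : X) {m N : ℕ} {t : ℝ} (ht : 0 ≤ t)
    (hN : ⌊t⌋₊ + m < N) : ergMaxTrunc τ f m (τ^[⌊t⌋₊] x) ≤ hlMax (orbitStepFun τ f N x) t :=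
  iSup₂_le fun _ hn => ergAvg_le_hlMax_orbitStepFun f x ht (by omega)

end Orbit

section BirkhoffSum

variable {X : Type*} {τ : X → X}

theorem Measurable.birkhoffSum {M : Type*} [MeasurableSpace X] [AddCommMonoid M] [MeasurableSpace M]
    [MeasurableAdd₂ M] {g : X → M} (hg : Measurable g) (hτ : Measurable τ) (n : ℕ) :
    Measurable (birkhoffSum τ g n) :=
  Finset.measurable_fun_sum _ fun k _ => hg.comp (hτ.iterate k)

theorem MeasureTheory.MeasurePreserving.lintegral_birkhoffSum [MeasurableSpace X] {μ : Measure X}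
    (hτ : MeasurePreserving τ μ μ) {g : X → ℝ≥0∞} (hg : Measurable g) (n : ℕ) :
    ∫⁻ x, birkhoffSum τ g n x ∂μ = n * ∫⁻ x, g x ∂μ := by
  simp only [birkhoffSum]
  rw [lintegral_finsetSum (f := fun k x => g (τ^[k] x)) _ fun k _ =>
    hg.comp (hτ.measurable.iterate k)]
  simp [(hτ.iterate _).lintegral_comp hg]

end BirkhoffSum

section Transference

variable {X : Type*} {τ : X → X} {r p : ℝ} {c : ℝ≥0∞}

theorem birkhoffSum_ellNormPow_ergMaxTrunc_le (hr : 0 < r) (hp : 0 < p)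
    (hFS : FeffermanSteinIneq r p c) (f : ℕ → X → ℝ) (m N : ℕ) (x : X) :
    birkhoffSum τ (fun y => ellNormPow r p fun j => ergMaxTrunc τ (f j) m y) N x
      ≤ c ^ p *
        birkhoffSum τ (fun y => ellNormPow r p fun j => ENNReal.ofReal |f j y|) (N + m) x := by
  set g := fun j => orbitStepFun τ (f j) (N + m) x
  have hlhs : birkhoffSum τ (fun y => ellNormPow r p fun j => ergMaxTrunc τ (f j) m y) N x
      ≤ ∫⁻ t, ellNormPow r p fun j => hlMax (g j) t :=
    calc birkhoffSum τ (fun y => ellNormPow r p fun j => ergMaxTrunc τ (f j) m y) N x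
        = ∫⁻ t in Set.Ico (0 : ℝ) N,
            ellNormPow r p fun j => ergMaxTrunc τ (f j) m (τ^[⌊t⌋₊] x) :=
          (lintegral_Ico_zero_natFloor
            (fun k => ellNormPow r p fun j => ergMaxTrunc τ (f j) m (τ^[k] x)) N).symm
      _ ≤ ∫⁻ t in Set.Ico (0 : ℝ) N, ellNormPow r p fun j => hlMax (g j) t := by
          refine setLIntegral_mono' measurableSet_Ico fun t ht =>
            ellNormPow_mono hr hp.le fun j => ergMaxTrunc_le_hlMax_orbitStepFun _ _ ht.1 ?_
          have := (Nat.floor_lt ht.1).2 ht.2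
          omega
      _ ≤ _ := setLIntegral_le_lintegral _ _
  have hrhs : ∫⁻ t, (ellNormPow r p fun j => ENNReal.ofReal |g j t|)
      = birkhoffSum τ (fun y => ellNormPow r p fun j => ENNReal.ofReal |f j y|) (N + m) x := by
    have hsupp : (fun t => ellNormPow r p fun j => ENNReal.ofReal |g j t|)
        = (Set.Ico (0 : ℝ) (N + m : ℕ)).indicator
            fun t => ellNormPow r p fun j => ENNReal.ofReal |f j (τ^[⌊t⌋₊] x)| := by
      funext t
      by_cases ht : t ∈ Set.Ico (0 : ℝ) (N + m : ℕ)
      · simp only [Set.indicator_of_mem ht, g, orbitStepFun_of_mem _ x ht]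
      · simp only [Set.indicator_of_notMem ht, g,
          orbitStepFun_of_notMem _ x ht, abs_zero, ENNReal.ofReal_zero]
        exact ellNormPow_zero hr hp
    rw [hsupp, lintegral_indicator measurableSet_Ico, lintegral_Ico_zero_natFloor
      (fun k => ellNormPow r p fun j => ENNReal.ofReal |f j (τ^[k] x)|)]
    rfl
  calc _ ≤ _ := hlhs
    _ ≤ c ^ p * ∫⁻ t, ellNormPow r p fun j => ENNReal.ofReal |g j t| :=
        ENNReal.le_rpow_mul_of_rpow_one_div_le hp
          (hFS g fun j => measurable_orbitStepFun (f j) (N + m) x)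
    _ = _ := by rw [hrhs]

theorem lintegral_ellNormPow_ergMax_le [MeasurableSpace X] {μ : Measure X}
    (hτ : MeasurePreserving τ μ μ) (hr : 0 < r) (hp : 0 < p) (hFS : FeffermanSteinIneq r p c)
    {f : ℕ → X → ℝ} (hf : ∀ j, Measurable (f j)) :
    ∫⁻ x, (ellNormPow r p fun j => ergMax τ (f j) x) ∂μ
      ≤ c ^ p * ∫⁻ x, (ellNormPow r p fun j => ENNReal.ofReal |f j x|) ∂μ := by
  set G : ℕ → X → ℝ≥0∞ := fun m x => ellNormPow r p fun j => ergMaxTrunc τ (f j) m x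
  set H : X → ℝ≥0∞ := fun x => ellNormPow r p fun j => ENNReal.ofReal |f j x|
  have hG : ∀ m, Measurable (G m) := fun m =>
    Measurable.ellNormPow fun j => measurable_ergMaxTrunc hτ.measurable (hf j) m
  have hH : Measurable H := Measurable.ellNormPow fun j => (hf j).abs.ennreal_ofReal
  have hG_mono : Monotone G := fun _ _ hmn x =>
    ellNormPow_mono hr hp.le fun j => monotone_ergMaxTrunc (f j) x hmn
  have hG_iSup : ∀ x, ⨆ m, G m x = ellNormPow r p fun j => ergMax τ (f j) x := fun x => by
    rw [iSup_ellNormPow hr hp fun _ _ hmn j => monotone_ergMaxTrunc (f j) x hmn]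
    congr 1
    funext j
    rw [iSup_apply, iSup_ergMaxTrunc]
  have hG_le : ∀ m, ∫⁻ x, G m x ∂μ ≤ c ^ p * ∫⁻ x, H x ∂μ := fun m =>
    ENNReal.le_of_forall_nat_mul_le_mul_add (m := m) fun N => calc
      N * ∫⁻ x, G m x ∂μ = ∫⁻ x, birkhoffSum τ (G m) N x ∂μ :=
          (hτ.lintegral_birkhoffSum (hG m) N).symm
      _ ≤ ∫⁻ x, c ^ p * birkhoffSum τ H (N + m) x ∂μ :=
          lintegral_mono fun x => birkhoffSum_ellNormPow_ergMaxTrunc_le hr hp hFS f m N x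
      _ = c ^ p * (∫⁻ x, H x ∂μ) * (N + m) := by
          rw [lintegral_const_mul _ (hH.birkhoffSum hτ.measurable _), hτ.lintegral_birkhoffSum hH]
          push_cast
          ring
  calc ∫⁻ x, (ellNormPow r p fun j => ergMax τ (f j) x) ∂μ = ∫⁻ x, ⨆ m, G m x ∂μ := by
        simp_rw [hG_iSup]
    _ = ⨆ m, ∫⁻ x, G m x ∂μ := lintegral_iSup hG hG_mono
    _ ≤ _ := iSup_le hG_le

end Transference

theorem ergodic_vector_valued_strong_general (r p : ℝ) (hr : 1 < r) (hp : 1 < p)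
    (C : ℝ)
    (hFS : ∀ f : ℕ → ℝ → ℝ, (∀ j, Measurable (f j)) →
      (∫⁻ t, (∑' j, hlMax (f j) t ^ r) ^ (p / r)) ^ (1 / p)
        ≤ ENNReal.ofReal C * (∫⁻ t, (∑' j, ENNReal.ofReal |f j t| ^ r) ^ (p / r)) ^ (1 / p))
    {X : Type*} [MeasurableSpace X] (μ : Measure X)
    (τ : X → X) (hτ : Ergodic τ μ)
    (f : ℕ → X → ℝ) (hf : ∀ j, Measurable (f j)) :
    (∫⁻ x, (∑' j, ergMax τ (f j) x ^ r) ^ (p / r) ∂μ) ^ (1 / p)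
      ≤ ENNReal.ofReal C *
        (∫⁻ x, (∑' j, ENNReal.ofReal |f j x| ^ r) ^ (p / r) ∂μ) ^ (1 / p) := by
  have hp₀ : 0 < p := one_pos.trans hp
  rw [← ENNReal.rpow_mul_rpow_one_div hp₀]
  exact ENNReal.rpow_le_rpow
    (lintegral_ellNormPow_ergMax_le hτ.toMeasurePreserving (one_pos.trans hr) hp₀ hFS hf)
    (one_div_pos.2 hp₀).le

theorem ergodic_vector_valued_strong (r p : ℝ) (hr : 1 < r) (hp : 1 < p)
    (C : ℝ) (hC : 0 < C)
    (hFS : ∀ f : ℕ → ℝ → ℝ, (∀ j, Measurable (f j)) →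
      (∫⁻ t, (∑' j, hlMax (f j) t ^ r) ^ (p / r)) ^ (1 / p)
        ≤ ENNReal.ofReal C * (∫⁻ t, (∑' j, ENNReal.ofReal |f j t| ^ r) ^ (p / r)) ^ (1 / p))
    {X : Type*} [MeasurableSpace X] (μ : Measure X) [IsProbabilityMeasure μ]
    (τ : X → X) (hτ : Ergodic τ μ)
    (f : ℕ → X → ℝ) (hf : ∀ j, Measurable (f j)) :
    (∫⁻ x, (∑' j, ergMax τ (f j) x ^ r) ^ (p / r) ∂μ) ^ (1 / p)
      ≤ ENNReal.ofReal C *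
        (∫⁻ x, (∑' j, ENNReal.ofReal |f j x| ^ r) ^ (p / r) ∂μ) ^ (1 / p) :=
  ergodic_vector_valued_strong_general r p hr hp C hFS μ τ hτ f hf
end

section
/- Discrete transfer of vector-valued weak type (1,1) bounds: Let M_N f(i) = sup_{1 ≤ n ≤ N} (1/n) ∑_{k=0}^{n-1} |f(i+k)| on ℤ. Suppose for some 1 < r < ∞ and constant C (independent of N) one has #{i ∈ ℤ : (∑_j (M_N f_j(i))^r)^{1/r} > λ} ≤ (C/λ) ∑_{i ∈ ℤ} (∑_j |f_j(i)|^r)^{1/r} for all λ > 0 and all sequences (f_j) on ℤ. Then for any measure-preserving transformation τ of a probability space (X, μ), with M♯_N f(x) = sup_{1 ≤ n ≤ N} (1/n) ∑_{k=0}^{n-1} |f(τ^k x)|, one has μ{x : (∑_j (M♯_N f_j(x))^r)^{1/r} > λ} ≤ (C/λ) ∫_X (∑_j |f_j(x)|^r)^{1/r} dμ for all λ > 0. -/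
open MeasureTheory ENNReal

/-- Truncated one-sided discrete maximal operator on `ℤ`. -/
noncomputable def dMax (N : ℕ) (f : ℤ → ℝ) (i : ℤ) : ℝ≥0∞ :=
  ⨆ n ∈ Finset.Icc 1 N, (∑ k ∈ Finset.range n, ENNReal.ofReal |f (i + k)|) / (n : ℝ≥0∞)

/-- Truncated ergodic maximal operator. -/
noncomputable def ergMaxN {X : Type*} (τ : X → X) (N : ℕ) (f : X → ℝ) (x : X) : ℝ≥0∞ :=
  ⨆ n ∈ Finset.Icc 1 N, (∑ k ∈ Finset.range n, ENNReal.ofReal |f (τ^[k] x)|) / (n : ℝ≥0∞)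
/-
Calderón transference. Fix `x` and a length `L`, and copy the orbit segment
`f (x), f (τ x), …, f (τ^(L+N-1) x)` onto `{0, …, L+N-1} ⊆ ℤ`, zero elsewhere. For `k < L` the
window of length `N` starting at `k` stays inside the segment, so the discrete maximal function of
the copy at `k` is the ergodic maximal function at `τ^k x`. The discrete weak type bound therefore
gives `#{k < L : τ^k x ∈ A} ≤ (C/λ) ∑_{k < L+N} F (τ^k x)`, where `A` is the level set and `F` the
`ℓ^r` norm of `(f_j)`. Integrating in `x` and using that `τ` preserves `μ` yields
`L μ(A) ≤ (L + N) (C/λ) ∫ F`, and letting `L → ∞` gives the claim.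
-/

open Finset

noncomputable def lrNorm (r : ℝ) (a : ℕ → ℝ≥0∞) : ℝ≥0∞ :=
  (∑' j, a j ^ r) ^ (1 / r)

lemma lrNorm_zero {r : ℝ} (hr : 0 < r) : lrNorm r 0 = 0 := by
  simp [lrNorm, ENNReal.zero_rpow_of_pos hr, hr]

theorem ENNReal.le_of_forall_natCast_mul_le_add_mul {a b : ℝ≥0∞} (N : ℕ)
    (h : ∀ L : ℕ, L * a ≤ (L + N) * b) : a ≤ b := by
  by_cases hb : b = ⊤
  · exact hb ▸ le_top
  by_contra hab
  obtain ⟨L, hL⟩ := ENNReal.exists_nat_mul_gt (tsub_pos_iff_lt.2 (not_le.1 hab)).ne'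
    (ENNReal.mul_ne_top (ENNReal.natCast_ne_top N) hb)
  have : (L : ℝ≥0∞) * (a - b) ≤ N * b := by
    rw [ENNReal.mul_sub fun _ _ => ENNReal.natCast_ne_top L, tsub_le_iff_left, ← add_mul]
    exact h L
  exact (hL.trans_le this).false

theorem MeasureTheory.MeasurePreserving.lintegral_sum_range_iterate {X : Type*}
    [MeasurableSpace X] {μ : Measure X} {τ : X → X} (hτ : MeasurePreserving τ μ μ)
    {F : X → ℝ≥0∞} (hF : Measurable F) (M : ℕ) :
    ∫⁻ x, ∑ k ∈ range M, F (τ^[k] x) ∂μ = M * ∫⁻ x, F x ∂μ := by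
  rw [lintegral_finsetSum _ fun k _ => hF.fun_comp (hτ.measurable.iterate k)]
  simp [(hτ.iterate _).lintegral_comp hF]

section Transference

variable {X : Type*} (τ : X → X)

def orbitSegment (M : ℕ) (f : X → ℝ) (x : X) (i : ℤ) : ℝ :=
  if 0 ≤ i ∧ i < M then f (τ^[i.toNat] x) else 0

variable {τ}

lemma orbitSegment_natCast {M k : ℕ} (hk : k < M) (f : X → ℝ) (x : X) :
    orbitSegment τ M f x k = f (τ^[k] x) := by
  simp [orbitSegment, hk]

lemma dMax_orbitSegment {N M k : ℕ} (hk : k + N ≤ M) (f : X → ℝ) (x : X) :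
    dMax N (orbitSegment τ M f x) k = ergMaxN τ N f (τ^[k] x) := by
  refine biSup_congr fun n hn => ?_
  congr 1
  refine sum_congr rfl fun m hm => ?_
  have hmN : m < N := (mem_range.1 hm).trans_le (mem_Icc.1 hn).2
  rw [← Nat.cast_add, orbitSegment_natCast (by omega), add_comm, Function.iterate_add_apply]

lemma tsum_lrNorm_orbitSegment {r : ℝ} (hr : 0 < r) (M : ℕ) (f : ℕ → X → ℝ) (x : X) :
    ∑' i : ℤ, lrNorm r (fun j => ENNReal.ofReal |orbitSegment τ M (f j) x i|)
      = ∑ k ∈ range M, lrNorm r (fun j => ENNReal.ofReal |f j (τ^[k] x)|) := by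
  rw [tsum_eq_sum (s := (range M).map Nat.castEmbedding), sum_map]
  · refine sum_congr rfl fun k hk => ?_
    simp_rw [Nat.castEmbedding_apply, orbitSegment_natCast (mem_range.1 hk)]
  · intro i hi
    have hzero : ∀ j, orbitSegment τ M (f j) x i = 0 := fun j => by
      refine if_neg fun ⟨h0, hM⟩ => hi ?_
      exact mem_map.2 ⟨i.toNat, mem_range.2 (by omega), by simp [h0]⟩
    simp_rw [hzero, abs_zero, ENNReal.ofReal_zero]
    exact lrNorm_zero hr

lemma measurable_ergMaxN [MeasurableSpace X] (hτ : Measurable τ) {f : X → ℝ}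
    (hf : Measurable f) (N : ℕ) : Measurable (ergMaxN τ N f) :=
  Measurable.iSup fun _ => Measurable.iSup fun _ =>
    (Finset.measurable_sum _ fun k _ =>
      ENNReal.measurable_ofReal.comp (hf.comp (hτ.iterate k)).abs).div_const _

lemma sum_indicator_iterate_le_of_discrete_bound {r : ℝ} (hr : 0 < r) {N : ℕ} {lam : ℝ}
    {K : ℝ≥0∞}
    (hyp : ∀ g : ℕ → ℤ → ℝ,
      Measure.count {i : ℤ | ENNReal.ofReal lam < lrNorm r (fun j => dMax N (g j) i)}
        ≤ K * ∑' i : ℤ, lrNorm r (fun j => ENNReal.ofReal |g j i|))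
    (f : ℕ → X → ℝ) (x : X) (L : ℕ) :
    ∑ k ∈ range L,
        {y | ENNReal.ofReal lam < lrNorm r (fun j => ergMaxN τ N (f j) y)}.indicator 1 (τ^[k] x)
      ≤ K * ∑ k ∈ range (L + N), lrNorm r (fun j => ENNReal.ofReal |f j (τ^[k] x)|) := by
  set g : ℕ → ℤ → ℝ := fun j => orbitSegment τ (L + N) (f j) x
  set B := {i : ℤ | ENNReal.ofReal lam < lrNorm r (fun j => dMax N (g j) i)}
  calc ∑ k ∈ range L,
        {y | ENNReal.ofReal lam < lrNorm r (fun j => ergMaxN τ N (f j) y)}.indicator 1 (τ^[k] x)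
      = ∑ i ∈ (range L).map Nat.castEmbedding, B.indicator 1 i := by
        rw [sum_map]
        refine sum_congr rfl fun k hk => ?_
        have hkN : k + N ≤ L + N := Nat.add_le_add_right (mem_range.1 hk).le N
        simp only [B, g, Set.indicator, Set.mem_ofPred_eq, Pi.one_apply, Nat.castEmbedding_apply,
          dMax_orbitSegment hkN]
    _ ≤ ∑' i, B.indicator 1 i := ENNReal.sum_le_tsum _
    _ = Measure.count B := by
        rw [← lintegral_count, lintegral_indicator_one MeasurableSet.of_discrete]
    _ ≤ K * ∑' i : ℤ, lrNorm r (fun j => ENNReal.ofReal |g j i|) := hyp g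
    _ = _ := by rw [tsum_lrNorm_orbitSegment hr]

end Transference

theorem discrete_transfer_weak_general (r : ℝ) (hr : 1 < r) (C : ℝ)
    (hyp : ∀ N : ℕ, ∀ f : ℕ → ℤ → ℝ, ∀ lam : ℝ, 0 < lam →
      Measure.count {i : ℤ | ENNReal.ofReal lam < (∑' j, dMax N (f j) i ^ r) ^ (1 / r)}
        ≤ (ENNReal.ofReal C / ENNReal.ofReal lam) *
            ∑' i : ℤ, (∑' j, ENNReal.ofReal |f j i| ^ r) ^ (1 / r))
    {X : Type*} [MeasurableSpace X] (μ : Measure X)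
    (τ : X → X) (hτ : MeasurePreserving τ μ μ)
    (f : ℕ → X → ℝ) (hf : ∀ j, Measurable (f j)) (N : ℕ)
    (lam : ℝ) (hlam : 0 < lam) :
    μ {x : X | ENNReal.ofReal lam < (∑' j, ergMaxN τ N (f j) x ^ r) ^ (1 / r)}
      ≤ (ENNReal.ofReal C / ENNReal.ofReal lam) *
          ∫⁻ x, (∑' j, ENNReal.ofReal |f j x| ^ r) ^ (1 / r) ∂μ := by
  set A := {x : X | ENNReal.ofReal lam < lrNorm r (fun j => ergMaxN τ N (f j) x)}
  set F := fun x => lrNorm r (fun j => ENNReal.ofReal |f j x|)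
  set K := ENNReal.ofReal C / ENNReal.ofReal lam
  have hF : Measurable F := (Measurable.tsum fun j =>
    (ENNReal.measurable_ofReal.comp (hf j).abs).pow_const r).pow_const _
  have hA : MeasurableSet A := measurableSet_lt measurable_const <|
    (Measurable.tsum fun j =>
      (measurable_ergMaxN hτ.measurable (hf j) N).pow_const r).pow_const _
  refine ENNReal.le_of_forall_natCast_mul_le_add_mul N fun L => ?_
  calc (L : ℝ≥0∞) * μ A = ∫⁻ x, ∑ k ∈ range L, A.indicator 1 (τ^[k] x) ∂μ := by
        rw [hτ.lintegral_sum_range_iterate (measurable_one.indicator hA),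
          lintegral_indicator_one hA]
    _ ≤ ∫⁻ x, K * ∑ k ∈ range (L + N), F (τ^[k] x) ∂μ :=
        lintegral_mono fun x => sum_indicator_iterate_le_of_discrete_bound (zero_lt_one.trans hr)
          (fun g => hyp N g lam hlam) f x L
    _ = (L + N) * (K * ∫⁻ x, F x ∂μ) := by
        rw [lintegral_const_mul _ (Finset.measurable_sum _ fun k _ =>
          hF.fun_comp (hτ.measurable.iterate k)), hτ.lintegral_sum_range_iterate hF]
        push_cast
        ring

/-- Discrete transfer of vector-valued weak type `(1,1)` bounds. -/
theorem discrete_transfer_weak (r : ℝ) (hr : 1 < r) (C : ℝ) (hC : 0 < C)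
    (hyp : ∀ N : ℕ, ∀ f : ℕ → ℤ → ℝ, ∀ lam : ℝ, 0 < lam →
      Measure.count {i : ℤ | ENNReal.ofReal lam < (∑' j, dMax N (f j) i ^ r) ^ (1 / r)}
        ≤ (ENNReal.ofReal C / ENNReal.ofReal lam) *
            ∑' i : ℤ, (∑' j, ENNReal.ofReal |f j i| ^ r) ^ (1 / r))
    {X : Type*} [MeasurableSpace X] (μ : Measure X) [IsProbabilityMeasure μ]
    (τ : X → X) (hτ : MeasurePreserving τ μ μ)
    (f : ℕ → X → ℝ) (hf : ∀ j, Measurable (f j)) (N : ℕ)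
    (lam : ℝ) (hlam : 0 < lam) :
    μ {x : X | ENNReal.ofReal lam < (∑' j, ergMaxN τ N (f j) x ^ r) ^ (1 / r)}
      ≤ (ENNReal.ofReal C / ENNReal.ofReal lam) *
          ∫⁻ x, (∑' j, ENNReal.ofReal |f j x| ^ r) ^ (1 / r) ∂μ :=
  discrete_transfer_weak_general r hr C hyp μ τ hτ f hf N lam hlam
end
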